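/- arXiv:2405.08297 — 3 statements merged into one kernel-verified Lean document; each statement's English description precedes it below -/
import Mathlib

section
/- Every weak abductive explanation X intersects every weak contrastive explanation Y, i.e., WAXps are hitting sets of the set of WCXps. -/
def WAXp {m : ℕ} {K : Type*} (F : Set (Fin m → ℝ)) (κ : (Fin m → ℝ) → K)
    (v : Fin m → ℝ) (c : K) (X : Set (Fin m)) : Prop :=
  ∀ x ∈ F, (∀ i ∈ X, x i = v i) → κ x = c

def WCXp {m : ℕ} {K : Type*} (F : Set (Fin m → ℝ)) (κ : (Fin m → ℝ) → K)
    (v : Fin m → ℝ) (c : K) (Y : Set (Fin m)) : Prop :=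
  ∃ x ∈ F, (∀ i ∉ Y, x i = v i) ∧ κ x ≠ c

theorem waxp_hits_wcxp_general {m : ℕ} {K : Type*} (F : Set (Fin m → ℝ))
    (κ : (Fin m → ℝ) → K) (v : Fin m → ℝ) (c : K)
    (X Y : Set (Fin m)) (hX : WAXp F κ v c X) (hY : WCXp F κ v c Y) :
    (X ∩ Y).Nonempty := by
  obtain ⟨x, hxF, hxv, hκx⟩ := hY
  rw [← Set.not_disjoint_iff_nonempty_inter]
  intro hXY
  exact hκx (hX x hxF fun i hiX => hxv i (hXY.notMem_of_mem_left hiX))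

/-- Every WAXp intersects every WCXp. -/
theorem waxp_hits_wcxp {m : ℕ} {K : Type*} (F : Set (Fin m → ℝ))
    (κ : (Fin m → ℝ) → K) (v : Fin m → ℝ) (c : K)
    (hv : v ∈ F) (hc : κ v = c)
    (X Y : Set (Fin m)) (hX : WAXp F κ v c X) (hY : WCXp F κ v c Y) :
    (X ∩ Y).Nonempty :=
  waxp_hits_wcxp_general F κ v c X Y hX hY
end

section
/- A set X ⊆ F is an abductive explanation (AXp), i.e., a subset-minimal WAXp, if and only if X is a minimal hitting set of the collection of all contrastive explanations (CXps), i.e., all subset-minimal WCXps. -/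
def AXp {m : ℕ} {K : Type*} (F : Set (Fin m → ℝ)) (κ : (Fin m → ℝ) → K)
    (v : Fin m → ℝ) (c : K) (X : Set (Fin m)) : Prop :=
  WAXp F κ v c X ∧ ∀ X' ⊂ X, ¬ WAXp F κ v c X'

def CXp {m : ℕ} {K : Type*} (F : Set (Fin m → ℝ)) (κ : (Fin m → ℝ) → K)
    (v : Fin m → ℝ) (c : K) (Y : Set (Fin m)) : Prop :=
  WCXp F κ v c Y ∧ ∀ Y' ⊂ Y, ¬ WCXp F κ v c Y'

def HittingSet {α : Type*} (B : Set (Set α)) (H : Set α) : Prop :=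
  ∀ P ∈ B, (H ∩ P).Nonempty

def MinHittingSet {α : Type*} (B : Set (Set α)) (H : Set α) : Prop :=
  HittingSet B H ∧ ∀ H' ⊂ H, ¬ HittingSet B H'

theorem minHittingSet_iff_minimal {α : Type*} (B : Set (Set α)) (H : Set α) :
    MinHittingSet B H ↔ Minimal (HittingSet B) H :=
  minimal_iff_forall_lt.symm

theorem hittingSet_setOf_minimal_iff {α : Type*} [Finite α] (P : Set α → Prop) (H : Set α) :
    HittingSet {Y | Minimal P Y} H ↔ ∀ Y, P Y → (H ∩ Y).Nonempty := by
  refine ⟨fun hH Y hY => ?_, fun hH Y hY => hH Y hY.prop⟩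
  obtain ⟨Z, hZY, hZ⟩ := Finite.exists_le_minimal hY
  exact (hH Z hZ).mono (Set.inter_subset_inter_right H hZY)

section Explanations

variable {m : ℕ} {K : Type*} (F : Set (Fin m → ℝ)) (κ : (Fin m → ℝ) → K) (v : Fin m → ℝ) (c : K)

theorem axp_iff_minimal (X : Set (Fin m)) : AXp F κ v c X ↔ Minimal (WAXp F κ v c) X :=
  minimal_iff_forall_lt.symm

theorem cxp_iff_minimal (Y : Set (Fin m)) : CXp F κ v c Y ↔ Minimal (WCXp F κ v c) Y :=
  minimal_iff_forall_lt.symm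

theorem waxp_iff_forall_wcxp_inter_nonempty (X : Set (Fin m)) :
    WAXp F κ v c X ↔ ∀ Y, WCXp F κ v c Y → (X ∩ Y).Nonempty := by
  constructor
  · rintro hX Y ⟨x, hxF, hxY, hxc⟩
    by_contra hXY
    exact hxc (hX x hxF fun i hiX => hxY i fun hiY => hXY ⟨i, hiX, hiY⟩)
  · intro hX x hxF hxX
    by_contra hxc
    obtain ⟨i, hiX, hxi⟩ := hX {i | x i ≠ v i} ⟨x, hxF, fun i hi => not_not.mp hi, hxc⟩
    exact hxi (hxX i hiX)

theorem waxp_eq_hittingSet_cxp : WAXp F κ v c = HittingSet {Y | CXp F κ v c Y} := by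
  ext X
  simp only [cxp_iff_minimal, hittingSet_setOf_minimal_iff,
    waxp_iff_forall_wcxp_inter_nonempty]

end Explanations

theorem axp_iff_mhs_of_cxps_general {m : ℕ} {K : Type*} (F : Set (Fin m → ℝ))
    (κ : (Fin m → ℝ) → K) (v : Fin m → ℝ) (c : K)
    (X : Set (Fin m)) :
    AXp F κ v c X ↔ MinHittingSet {Y | CXp F κ v c Y} X := by
  rw [axp_iff_minimal, minHittingSet_iff_minimal, waxp_eq_hittingSet_cxp]

/-- MHS duality: X is an AXp iff X is a minimal hitting set of the CXps. -/
theorem axp_iff_mhs_of_cxps {m : ℕ} {K : Type*} (F : Set (Fin m → ℝ))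
    (κ : (Fin m → ℝ) → K) (v : Fin m → ℝ) (c : K)
    (hF : F.Finite) (hFne : F.Nonempty) (hv : v ∈ F) (hc : κ v = c)
    (X : Set (Fin m)) :
    AXp F κ v c X ↔ MinHittingSet {Y | CXp F κ v c Y} X :=
  axp_iff_mhs_of_cxps_general F κ v c X
end

section
/- Correctness of the dichotomic search invariant: suppose W is an ordered set of features, S ⊆ F disjoint from W, S ∪ W_{1..j} is an ε-WAXp and S ∪ W_{1..j−1} is not an ε-WAXp (1 ≤ j ≤ |W|). Then the j-th feature of W is a member of every ε-AXp that contains S and is contained in S ∪ W_{1..j}. -/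
/-! If `Wⱼ ∉ A`, then `A ⊆ S ∪ W₁..ⱼ₋₁`, so by monotonicity `S ∪ W₁..ⱼ₋₁` would be an ε-WAXp. -/

open Real in
/-- The p-norm of a vector in ℝ^m. -/
noncomputable def pNorm (p : ℝ) {m : ℕ} (z : Fin m → ℝ) : ℝ :=
  (∑ i, |z i| ^ p) ^ (1 / p)

/-- Distance-restricted weak abductive explanation (ε-WAXp). -/
def dWAXp {m : ℕ} {K : Type*} (F : Set (Fin m → ℝ)) (κ : (Fin m → ℝ) → K)
    (v : Fin m → ℝ) (c : K) (p ε : ℝ) (X : Set (Fin m)) : Prop :=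
  ∀ x ∈ F, ((∀ i ∈ X, x i = v i) ∧ pNorm p (x - v) ≤ ε) → κ x = c

/-- Distance-restricted weak contrastive explanation (ε-WCXp). -/
def dWCXp {m : ℕ} {K : Type*} (F : Set (Fin m → ℝ)) (κ : (Fin m → ℝ) → K)
    (v : Fin m → ℝ) (c : K) (p ε : ℝ) (Y : Set (Fin m)) : Prop :=
  ∃ x ∈ F, (∀ i ∉ Y, x i = v i) ∧ pNorm p (x - v) ≤ ε ∧ κ x ≠ c

/-- ε-AXp: a subset-minimal ε-WAXp. -/
def dAXp {m : ℕ} {K : Type*} (F : Set (Fin m → ℝ)) (κ : (Fin m → ℝ) → K)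
    (v : Fin m → ℝ) (c : K) (p ε : ℝ) (X : Set (Fin m)) : Prop :=
  dWAXp F κ v c p ε X ∧ ∀ X' ⊂ X, ¬ dWAXp F κ v c p ε X'

theorem dWAXp.mono {m : ℕ} {K : Type*} {F : Set (Fin m → ℝ)} {κ : (Fin m → ℝ) → K}
    {v : Fin m → ℝ} {c : K} {p ε : ℝ} {X Y : Set (Fin m)} (hX : dWAXp F κ v c p ε X)
    (hXY : X ⊆ Y) : dWAXp F κ v c p ε Y :=
  fun x hx ⟨hfix, hnorm⟩ => hX x hx ⟨fun i hi => hfix i (hXY hi), hnorm⟩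

theorem List.mem_take_of_mem_take_add_one_of_ne {α : Type*} {l : List α} {n : ℕ} {a : α}
    (h : a ∈ l.take (n + 1)) (hn : n < l.length) (ha : a ≠ l[n]) : a ∈ l.take n := by
  rw [← List.take_append_getElem hn, List.mem_append, List.mem_singleton] at h
  exact h.resolve_right ha

/-- Dichotomic search invariant: if S ∪ W₁..j is an ε-WAXp and S ∪ W₁..j−1 is
not, then the j-th feature of the ordered set W belongs to every ε-AXp that
contains S and is contained in S ∪ W₁..j. -/
theorem dichotomic_transition_feature {m : ℕ} {K : Type*}
    (F : Set (Fin m → ℝ)) (κ : (Fin m → ℝ) → K) (v : Fin m → ℝ) (c : K)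
    (p ε : ℝ)
    (S : Set (Fin m)) (W : List (Fin m))
    (j : ℕ) (hj1 : 1 ≤ j) (hj2 : j ≤ W.length)
    (h2 : ¬ dWAXp F κ v c p ε (S ∪ {i | i ∈ W.take (j - 1)})) :
    ∀ A : Set (Fin m), dAXp F κ v c p ε A →
      S ⊆ A → A ⊆ S ∪ {i | i ∈ W.take j} →
      W.get ⟨j - 1, by omega⟩ ∈ A := by
  intro A hA _ hAW
  by_contra hw
  refine h2 (hA.1.mono fun i hi => (hAW hi).imp_right fun hiW => ?_)
  rw [← Nat.sub_add_cancel hj1] at hiW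
  exact List.mem_take_of_mem_take_add_one_of_ne hiW (by omega) fun h => hw (by rwa [h] at hi)
end
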